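/- Let D be the diagonal complex 2×2 matrix diag(exp(-πi/10), exp(-9πi/10)) and M the matrix from the mf₅ mixing. Then the matrices D and -M satisfy the relations D²⁰ = I, (-M)² = I, and ((-M)·D)³ = I. -/

import Mathlib

/-! With `a = (2/√5) sin(π/5)` and `b = (2/√5) sin(2π/5)` we have `M = !![a, b; b, -a]` and
`a² + b² = 1`, so `M` is a reflection and `M² = 1`. The entries of `D` are 20th roots of unity.
For `A = -M * D`, `det A = det M * det D = (-1) * (-1) = 1` and
`trace A = -a (e^{-πi/10} - e^{-9πi/10}) = -(2/√5) sin(π/5) * 2 cos(π/10) = -1`, so by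
Cayley–Hamilton `A² + A + 1 = 0`, hence `A³ = 1`. -/

open Real Matrix Complex

namespace Matrix

variable {R : Type*} [CommRing R]

theorem sq_sub_trace_smul_add_det_smul_eq_zero (A : Matrix (Fin 2) (Fin 2) R) :
    A ^ 2 - A.trace • A + A.det • (1 : Matrix (Fin 2) (Fin 2) R) = 0 := by
  rw [eta_fin_two A, sq, mul_fin_two, trace_fin_two_of, det_fin_two_of, one_fin_two]
  ext i j
  fin_cases i <;> fin_cases j <;> simp <;> ring

theorem pow_three_eq_one_of_trace_eq_neg_one_of_det_eq_one {A : Matrix (Fin 2) (Fin 2) R}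
    (htr : A.trace = -1) (hdet : A.det = 1) : A ^ 3 = 1 := by
  have hA : A ^ 2 + A + 1 = 0 := by
    simpa [htr, hdet] using A.sq_sub_trace_smul_add_det_smul_eq_zero
  rw [← sub_eq_zero, show A ^ 3 - 1 = (A - 1) * (A ^ 2 + A + 1) by noncomm_ring, hA, mul_zero]

theorem pow_fin_two_diagonal (e₁ e₂ : R) (n : ℕ) :
    !![e₁, 0; 0, e₂] ^ n = !![e₁ ^ n, 0; 0, e₂ ^ n] := by
  have h := diagonal_pow ![e₁, e₂] n
  simp only [diagonal_fin_two] at h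
  simpa using h

theorem sq_fin_two_reflection (a b : R) : !![a, b; b, -a] ^ 2 = (a ^ 2 + b ^ 2) • 1 := by
  rw [sq, mul_fin_two, one_fin_two]
  ext i j
  fin_cases i <;> fin_cases j <;> simp <;> ring

theorem pow_three_neg_fin_two_reflection_mul_diagonal {a b e₁ e₂ : R}
    (hab : a ^ 2 + b ^ 2 = 1) (he : e₁ * e₂ = -1) (htr : a * (e₁ - e₂) = 1) :
    (-!![a, b; b, -a] * !![e₁, 0; 0, e₂]) ^ 3 = 1 := by
  have hA : -!![a, b; b, -a] * !![e₁, 0; 0, e₂] =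
      !![-(a * e₁), -(b * e₂); -(b * e₁), a * e₂] := by
    ext i j
    fin_cases i <;> fin_cases j <;> simp
  apply pow_three_eq_one_of_trace_eq_neg_one_of_det_eq_one
  · rw [hA, trace_fin_two_of]
    linear_combination -htr
  · rw [hA, det_fin_two_of]
    linear_combination (-e₁ * e₂) * hab - he

end Matrix

-- Both identities become polynomial identities in `√5` once `sin (2x) = 2 sin x cos x`,
-- `sin² = 1 - cos²` and `cos (π/5) = (1 + √5)/4` are substituted.
theorem Real.sin_pi_div_five_mul_sin_two_pi_div_five :
    Real.sin (π / 5) * Real.sin (2 * π / 5) = √5 / 4 := by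
  have hs : Real.sin (π / 5) ^ 2 = 1 - Real.cos (π / 5) ^ 2 := sin_sq _
  have h5 : √5 ^ 2 = 5 := sq_sqrt (by norm_num)
  rw [mul_div_assoc, Real.sin_two_mul, cos_pi_div_five] at *
  linear_combination (1 + √5) / 2 * hs - (3 + √5) / 32 * h5

theorem Real.sin_sq_pi_div_five_add_sin_sq_two_pi_div_five :
    Real.sin (π / 5) ^ 2 + Real.sin (2 * π / 5) ^ 2 = 5 / 4 := by
  have hs : Real.sin (π / 5) ^ 2 = 1 - Real.cos (π / 5) ^ 2 := sin_sq _
  have h5 : √5 ^ 2 = 5 := sq_sqrt (by norm_num)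
  rw [mul_div_assoc, Real.sin_two_mul, cos_pi_div_five] at *
  linear_combination (1 + 4 * ((1 + √5) / 4) ^ 2) * hs + (1 - 4 * √5 - √5 ^ 2) / 64 * h5

theorem Real.cos_pi_div_ten : Real.cos (π / 10) = Real.sin (2 * π / 5) := by
  rw [← Real.cos_pi_div_two_sub]; ring_nf

theorem Complex.exp_neg_mul_I_mul_exp_sub_pi_mul_I (x : ℂ) :
    exp (-x * I) * exp ((x - π) * I) = -1 := by
  rw [← Complex.exp_add, show -x * I + (x - π) * I = -(π * I) by ring, Complex.exp_neg,
    exp_pi_mul_I]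
  norm_num

theorem Complex.exp_neg_mul_I_sub_exp_sub_pi_mul_I (x : ℂ) :
    exp (-x * I) - exp ((x - π) * I) = 2 * Complex.cos x := by
  rw [two_cos, sub_mul, Complex.exp_sub, exp_pi_mul_I]
  ring

theorem mf5_group_relations :
    let M : Matrix (Fin 2) (Fin 2) ℂ :=
      ((2 / Real.sqrt 5 : ℝ) : ℂ) •
        !![((Real.sin (π / 5) : ℝ) : ℂ), ((Real.sin (2 * π / 5) : ℝ) : ℂ);
           ((Real.sin (2 * π / 5) : ℝ) : ℂ), -((Real.sin (π / 5) : ℝ) : ℂ)]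
    let D : Matrix (Fin 2) (Fin 2) ℂ :=
      !![Complex.exp (-π * Complex.I / 10), 0;
         0, Complex.exp (-9 * π * Complex.I / 10)]
    D ^ 20 = 1 ∧ (-M) ^ 2 = 1 ∧ ((-M) * D) ^ 3 = 1 := by
  intro M D
  set a : ℝ := 2 / √5 * Real.sin (π / 5)
  set b : ℝ := 2 / √5 * Real.sin (2 * π / 5)
  have h5 : √5 ^ 2 = 5 := sq_sqrt (by norm_num)
  have hab : a ^ 2 + b ^ 2 = 1 := by
    simp only [a, b, mul_pow, div_pow, h5]
    linear_combination 4 / 5 * sin_sq_pi_div_five_add_sin_sq_two_pi_div_five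
  have habℂ : (a : ℂ) ^ 2 + (b : ℂ) ^ 2 = 1 := by exact_mod_cast hab
  have htr : a * (2 * Real.cos (π / 10)) = 1 := by
    have h5ne : √5 ≠ 0 := by positivity
    simp only [a]
    rw [cos_pi_div_ten]
    field_simp
    linear_combination 4 * sin_pi_div_five_mul_sin_two_pi_div_five
  have hM : M = !![(a : ℂ), b; b, -a] := by
    ext i j
    fin_cases i <;> fin_cases j <;> simp [M, a, b]
  have hD : D = !![exp (-((π / 10 : ℝ) : ℂ) * I), 0;
      0, exp ((((π / 10 : ℝ) : ℂ) - π) * I)] := by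
    simp only [D]; push_cast; ring_nf
  refine ⟨?_, ?_, ?_⟩
  · have h₁ : Complex.exp (-π * Complex.I / 10) ^ 20 = 1 := by
      rw [← Complex.exp_nat_mul]
      exact exp_eq_one_iff.2 ⟨-1, by push_cast; ring⟩
    have h₂ : Complex.exp (-9 * π * Complex.I / 10) ^ 20 = 1 := by
      rw [← Complex.exp_nat_mul]
      exact exp_eq_one_iff.2 ⟨-9, by push_cast; ring⟩
    rw [pow_fin_two_diagonal, h₁, h₂, one_fin_two]
  · rw [neg_sq, hM, sq_fin_two_reflection, habℂ, one_smul]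
  · rw [hM, hD]
    apply pow_three_neg_fin_two_reflection_mul_diagonal habℂ
    · exact exp_neg_mul_I_mul_exp_sub_pi_mul_I _
    · rw [exp_neg_mul_I_sub_exp_sub_pi_mul_I, ← ofReal_cos]
      exact_mod_cast htr
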